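/- arXiv:2012.11589 — 4 statements merged into one kernel-verified Lean document; each statement's English description precedes it below -/
import Mathlib

section
/- Let (X,d) be a metric space, let p ≥ 1 be a real number, and let k ≥ 1 be an integer. The latent Wasserstein discrepancy W_p^L satisfies: (i) W_p^L(μ,ν) ≥ 0 for all finitely supported probability measures μ, ν on X; (ii) W_p^L(μ,ν) = W_p^L(ν,μ) for all such μ, ν; and (iii) there exists a constant κ > 0 (one may take κ = 2·4^{1−1/p}) such that for all finitely supported probability measures μ, ν, ζ on X, W_p^L(μ,ν) ≤ κ·max{W_p^L(μ,ζ), W_p^L(ζ,ν)}. -/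
/-!
Gluing two transport plans along their common marginal (`P x y * Q y z / β y`) and applying
Minkowski's inequality to the glued plan gives the triangle inequality for `W_p`. If `(μz, ζ₁)`
are anchors for `(μ, ζ)` and `(ζ₂, νz)` anchors for `(ζ, ν)`, then `(μz, νz)` are anchors for
`(μ, ν)`, and the triangle inequality along `μz, ζ₁, ζ, ζ₂, νz` together with the power-mean
inequality bounds `W_p^p(μz, νz)` by `4^(p-1)` times the sum of the four intermediate costs.
Hence `OT^L(μ, ν) ≤ 4^(p-1) (OT^L(μ, ζ) + OT^L(ζ, ν))`, and `p`-th roots give the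
quasi-triangle inequality with `κ = (2 · 4^(p-1))^(1/p)`.
-/

open scoped BigOperators

/-- A finitely supported probability measure on `X`, given by its weight
function (nonnegative, finite support, total mass one). -/
structure FinProb (X : Type*) where
  w : X → ℝ
  nonneg : ∀ x, 0 ≤ w x
  finite : (Function.support w).Finite
  total : ∑ᶠ x, w x = 1

variable {X : Type*} [MetricSpace X]

/-- `P` is a coupling of `α` and `β`: entrywise nonnegative, finitely
supported, with row marginals `α` and column marginals `β`. -/
def IsCoupling (α β : FinProb X) (P : X → X → ℝ) : Prop :=
  (∀ x y, 0 ≤ P x y) ∧ (Function.support (Function.uncurry P)).Finite ∧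
  (∀ x, ∑ᶠ y, P x y = α.w x) ∧ (∀ y, ∑ᶠ x, P x y = β.w y)

/-- The transport cost `Σ_{x,y} d(x,y)^p · P x y` of a plan `P` (real exponent `p`). -/
noncomputable def transportCost (p : ℝ) (P : X → X → ℝ) : ℝ :=
  ∑ᶠ x, ∑ᶠ y, dist x y ^ p * P x y

/-- `W_p^p(α,β)`: the optimal transport cost with ground cost `d^p` between
finitely supported probability measures. -/
noncomputable def Wpp (p : ℝ) (α β : FinProb X) : ℝ :=
  sInf {c : ℝ | ∃ P : X → X → ℝ, IsCoupling α β P ∧ c = transportCost p P}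

/-- The latent optimal transport cost with (at most) `k` anchors on each side:
`OT^L(μ,ν) = inf { W_p^p(μ,μ_z) + W_p^p(μ_z,ν_z) + W_p^p(ν_z,ν) }`, the infimum
over finitely supported probability measures `μ_z, ν_z` supported on at most
`k` points. -/
noncomputable def OTL (p : ℝ) (k : ℕ) (μ ν : FinProb X) : ℝ :=
  sInf {c : ℝ | ∃ μz νz : FinProb X,
    μz.finite.toFinset.card ≤ k ∧ νz.finite.toFinset.card ≤ k ∧
    c = Wpp p μ μz + Wpp p μz νz + Wpp p νz ν}

/-- The latent Wasserstein discrepancy `W_p^L := (OT^L)^(1/p)`. -/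
noncomputable def WpL (p : ℝ) (k : ℕ) (μ ν : FinProb X) : ℝ :=
  OTL p k μ ν ^ (1 / p)

open Function Finset

section Finsum

variable {Y M : Type*} [AddCommMonoid M] {F : Y → Y → M} {s : Finset Y}

lemma Set.Finite.exists_subset_finset_prod {t : Set (Y × Y)} (ht : t.Finite) :
    ∃ s : Finset Y, t ⊆ (s : Set Y) ×ˢ s := by
  classical
  refine ⟨(ht.image Prod.fst).toFinset ∪ (ht.image Prod.snd).toFinset, fun z hz => ?_⟩
  simp only [Set.mem_prod, coe_union, Set.Finite.coe_toFinset, Set.mem_union]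
  exact ⟨.inl ⟨z, hz, rfl⟩, .inr ⟨z, hz, rfl⟩⟩

lemma mem_of_support_uncurry_subset (hF : support (uncurry F) ⊆ (s : Set Y) ×ˢ s) {x y : Y}
    (h : F x y ≠ 0) : x ∈ s ∧ y ∈ s :=
  hF (a := (x, y)) h

lemma finsum_right_eq_sum (hF : support (uncurry F) ⊆ (s : Set Y) ×ˢ s) (x : Y) :
    ∑ᶠ y, F x y = ∑ y ∈ s, F x y :=
  finsum_eq_sum_of_support_subset _ fun _ hy => (mem_of_support_uncurry_subset hF hy).2

lemma finsum_left_eq_sum (hF : support (uncurry F) ⊆ (s : Set Y) ×ˢ s) (y : Y) :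
    ∑ᶠ x, F x y = ∑ x ∈ s, F x y :=
  finsum_eq_sum_of_support_subset _ fun _ hx => (mem_of_support_uncurry_subset hF hx).1

lemma finsum_finsum_eq_sum_sum (hF : support (uncurry F) ⊆ (s : Set Y) ×ˢ s) :
    ∑ᶠ x, ∑ᶠ y, F x y = ∑ x ∈ s, ∑ y ∈ s, F x y := by
  simp_rw [finsum_right_eq_sum hF]
  refine finsum_eq_sum_of_support_subset _ fun x hx => ?_
  obtain ⟨y, -, hy⟩ := exists_ne_zero_of_sum_ne_zero hx
  exact (mem_of_support_uncurry_subset hF hy).1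

end Finsum

namespace FinProb

variable {Y : Type*}

lemma nonempty (α : FinProb Y) : Nonempty Y := by
  by_contra h
  have : IsEmpty Y := not_nonempty_iff.1 h
  exact one_ne_zero (α.total.symm.trans (finsum_of_isEmpty _))

noncomputable def dirac [DecidableEq Y] (a : Y) : FinProb Y where
  w := Pi.single a 1
  nonneg x := by rw [Pi.single_apply]; split_ifs <;> norm_num
  finite := (Set.finite_singleton a).subset Pi.support_single_subset
  total := by rw [finsum_eq_single _ a fun x hx => Pi.single_eq_of_ne hx _, Pi.single_eq_same]

lemma card_support_dirac [DecidableEq Y] (a : Y) : (dirac a).finite.toFinset.card = 1 := by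
  rw [← Set.ncard_eq_toFinset_card _ (dirac a).finite]
  simp [dirac, Pi.support_single_of_ne one_ne_zero]

end FinProb

namespace IsCoupling

variable {Y : Type*} {α β γ : FinProb Y} {P Q : Y → Y → ℝ} {s : Finset Y}

lemma sum_right_eq (hP : IsCoupling α β P) (hs : support (uncurry P) ⊆ (s : Set Y) ×ˢ s)
    (x : Y) : ∑ y ∈ s, P x y = α.w x :=
  (finsum_right_eq_sum hs x).symm.trans (hP.2.2.1 x)

lemma sum_left_eq (hP : IsCoupling α β P) (hs : support (uncurry P) ⊆ (s : Set Y) ×ˢ s)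
    (y : Y) : ∑ x ∈ s, P x y = β.w y :=
  (finsum_left_eq_sum hs y).symm.trans (hP.2.2.2 y)

lemma eq_zero_of_right_eq_zero (hP : IsCoupling α β P) {y : Y} (hy : β.w y = 0) (x : Y) :
    P x y = 0 := by
  obtain ⟨s, hs⟩ := hP.2.1.exists_subset_finset_prod
  by_cases hxy : x ∈ s ∧ y ∈ s
  · rw [← hP.sum_left_eq hs y] at hy
    exact (sum_eq_zero_iff_of_nonneg fun x _ => hP.1 x y).1 hy x hxy.1
  · exact not_ne_iff.1 (mt (mem_of_support_uncurry_subset hs) hxy)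

lemma eq_zero_of_left_eq_zero (hP : IsCoupling α β P) {x : Y} (hx : α.w x = 0) (y : Y) :
    P x y = 0 := by
  obtain ⟨s, hs⟩ := hP.2.1.exists_subset_finset_prod
  by_cases hxy : x ∈ s ∧ y ∈ s
  · rw [← hP.sum_right_eq hs x] at hx
    exact (sum_eq_zero_iff_of_nonneg fun y _ => hP.1 x y).1 hx y hxy.2
  · exact not_ne_iff.1 (mt (mem_of_support_uncurry_subset hs) hxy)

lemma flip (hP : IsCoupling α β P) : IsCoupling β α (flip P) :=
  ⟨fun y x => hP.1 x y, hP.2.1.preimage Prod.swap_injective.injOn, hP.2.2.2, hP.2.2.1⟩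

end IsCoupling

lemma isCoupling_mul {Y : Type*} (α β : FinProb Y) :
    IsCoupling α β fun x y => α.w x * β.w y := by
  refine ⟨fun x y => mul_nonneg (α.nonneg x) (β.nonneg y), ?_, fun x => ?_, fun y => ?_⟩
  · refine (α.finite.prod β.finite).subset fun z hz => ?_
    exact ⟨left_ne_zero_of_mul hz, right_ne_zero_of_mul hz⟩
  · rw [← mul_finsum, β.total, mul_one]
  · rw [← finsum_mul, α.total, one_mul]

lemma isCoupling_diag {Y : Type*} [DecidableEq Y] (α : FinProb Y) :
    IsCoupling α α fun x => Pi.single x (α.w x) := by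
  refine ⟨fun x y => ?_, (α.finite.image fun x => (x, x)).subset ?_, fun x => ?_, fun y => ?_⟩
  · by_cases h : x = y
    · subst h
      simpa using α.nonneg x
    · simp [Pi.single_eq_of_ne' h]
  · rintro ⟨x, y⟩ hxy
    by_cases h : x = y
    · subst h
      exact ⟨x, by simpa using hxy, rfl⟩
    · exact absurd (Pi.single_eq_of_ne' h _) hxy
  · exact (finsum_eq_single _ x fun y hy => Pi.single_eq_of_ne' (Ne.symm hy) _).trans
      (Pi.single_eq_same _ _)
  · exact (finsum_eq_single _ y fun x hx => Pi.single_eq_of_ne' hx _).trans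
      (Pi.single_eq_same _ _)

section Gluing

variable {Y : Type*} {α β γ : FinProb Y} {P Q : Y → Y → ℝ} {s : Finset Y}

/-- Where `β.w y = 0`, the column `P · y` and the row `Q y ·` vanish, so the junk value
`_ / 0 = 0` is the right one. -/
noncomputable def gluing (β : FinProb Y) (P Q : Y → Y → ℝ) (x y z : Y) : ℝ :=
  P x y * Q y z / β.w y

noncomputable def composeAlong (β : FinProb Y) (P Q : Y → Y → ℝ) (x z : Y) : ℝ :=
  ∑ᶠ y, gluing β P Q x y z

lemma gluing_nonneg (hP : ∀ x y, 0 ≤ P x y) (hQ : ∀ y z, 0 ≤ Q y z) (x y z : Y) :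
    0 ≤ gluing β P Q x y z :=
  div_nonneg (mul_nonneg (hP x y) (hQ y z)) (β.nonneg y)

lemma ne_zero_of_gluing_ne_zero {x y z : Y} (h : gluing β P Q x y z ≠ 0) :
    P x y ≠ 0 ∧ Q y z ≠ 0 :=
  mul_ne_zero_iff.1 (div_ne_zero_iff.1 h).1

lemma sum_gluing_right (hP : IsCoupling α β P) (hQ : IsCoupling β γ Q)
    (hsQ : support (uncurry Q) ⊆ (s : Set Y) ×ˢ s) (x y : Y) :
    ∑ z ∈ s, gluing β P Q x y z = P x y := by
  by_cases hy : β.w y = 0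
  · simp [gluing, hy, hP.eq_zero_of_right_eq_zero hy x]
  · simp only [gluing]
    rw [← sum_div, ← mul_sum, hQ.sum_right_eq hsQ y, mul_div_cancel_right₀ _ hy]

lemma sum_gluing_left (hP : IsCoupling α β P) (hQ : IsCoupling β γ Q)
    (hsP : support (uncurry P) ⊆ (s : Set Y) ×ˢ s) (y z : Y) :
    ∑ x ∈ s, gluing β P Q x y z = Q y z := by
  by_cases hy : β.w y = 0
  · simp [gluing, hy, hQ.eq_zero_of_left_eq_zero hy z]
  · simp only [gluing]
    rw [← sum_div, ← sum_mul, hP.sum_left_eq hsP y, mul_div_cancel_left₀ _ hy]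

lemma composeAlong_eq_sum (hsP : support (uncurry P) ⊆ (s : Set Y) ×ˢ s) (x z : Y) :
    composeAlong β P Q x z = ∑ y ∈ s, gluing β P Q x y z :=
  finsum_eq_sum_of_support_subset _ fun _ hy =>
    (mem_of_support_uncurry_subset hsP (ne_zero_of_gluing_ne_zero hy).1).2

lemma support_composeAlong_subset (hsP : support (uncurry P) ⊆ (s : Set Y) ×ˢ s)
    (hsQ : support (uncurry Q) ⊆ (s : Set Y) ×ˢ s) :
    support (uncurry (composeAlong β P Q)) ⊆ (s : Set Y) ×ˢ s := by
  rintro ⟨x, z⟩ hxz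
  rw [mem_support, uncurry_apply_pair, composeAlong_eq_sum hsP] at hxz
  obtain ⟨y, -, hy⟩ := exists_ne_zero_of_sum_ne_zero hxz
  obtain ⟨hPxy, hQyz⟩ := ne_zero_of_gluing_ne_zero hy
  exact ⟨(mem_of_support_uncurry_subset hsP hPxy).1, (mem_of_support_uncurry_subset hsQ hQyz).2⟩

lemma IsCoupling.composeAlong (hP : IsCoupling α β P) (hQ : IsCoupling β γ Q) :
    IsCoupling α γ (composeAlong β P Q) := by
  obtain ⟨s, hs⟩ := (hP.2.1.union hQ.2.1).exists_subset_finset_prod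
  obtain ⟨hsP, hsQ⟩ := Set.union_subset_iff.1 hs
  have hsR := support_composeAlong_subset (β := β) hsP hsQ
  refine ⟨fun x z => finsum_nonneg fun y => gluing_nonneg hP.1 hQ.1 x y z,
    (s.finite_toSet.prod s.finite_toSet).subset hsR, fun x => ?_, fun z => ?_⟩
  · rw [finsum_right_eq_sum hsR, ← hP.sum_right_eq hsP x]
    simp_rw [composeAlong_eq_sum hsP]
    rw [sum_comm]
    exact sum_congr rfl fun y _ => sum_gluing_right hP hQ hsQ x y
  · rw [finsum_left_eq_sum hsR, ← hQ.sum_left_eq hsQ z]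
    simp_rw [composeAlong_eq_sum hsP]
    rw [sum_comm]
    exact sum_congr rfl fun y _ => sum_gluing_left hP hQ hsP y z

end Gluing

lemma weighted_Lp_add_le {ι : Type*} (t : Finset ι) {a b w : ι → ℝ} {p : ℝ} (hp : 1 ≤ p)
    (ha : ∀ i ∈ t, 0 ≤ a i) (hb : ∀ i ∈ t, 0 ≤ b i) (hw : ∀ i ∈ t, 0 ≤ w i) :
    (∑ i ∈ t, (a i + b i) ^ p * w i) ^ (1 / p) ≤
      (∑ i ∈ t, a i ^ p * w i) ^ (1 / p) + (∑ i ∈ t, b i ^ p * w i) ^ (1 / p) := by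
  have hp0 : p ≠ 0 := (zero_lt_one.trans_le hp).ne'
  have hsum : ∀ c : ι → ℝ, (∀ i ∈ t, 0 ≤ c i) →
      ∑ i ∈ t, c i ^ p * w i = ∑ i ∈ t, (c i * w i ^ (1 / p)) ^ p := fun c hc =>
    sum_congr rfl fun i hi => by
      rw [Real.mul_rpow (hc i hi) (Real.rpow_nonneg (hw i hi) _), one_div,
        Real.rpow_inv_rpow (hw i hi) hp0]
  rw [hsum _ fun i hi => add_nonneg (ha i hi) (hb i hi), hsum a ha, hsum b hb]
  simp_rw [add_mul]
  exact Real.Lp_add_le_of_nonneg t hp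
    (fun i hi => mul_nonneg (ha i hi) (Real.rpow_nonneg (hw i hi) _))
    (fun i hi => mul_nonneg (hb i hi) (Real.rpow_nonneg (hw i hi) _))

section Transport

variable {p : ℝ} {α β γ : FinProb X} {P Q : X → X → ℝ} {s : Finset X}

lemma transportCost_eq_sum (hs : support (uncurry P) ⊆ (s : Set X) ×ˢ s) :
    transportCost p P = ∑ x ∈ s, ∑ y ∈ s, dist x y ^ p * P x y :=
  finsum_finsum_eq_sum_sum fun _ hz => hs (right_ne_zero_of_mul hz)

lemma transportCost_nonneg (hP : ∀ x y, 0 ≤ P x y) : 0 ≤ transportCost p P :=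
  finsum_nonneg fun x => finsum_nonneg fun y => mul_nonneg (by positivity) (hP x y)

lemma transportCost_flip (hP : (support (uncurry P)).Finite) :
    transportCost p (flip P) = transportCost p P := by
  obtain ⟨s, hs⟩ := hP.exists_subset_finset_prod
  have hs' : support (uncurry (flip P)) ⊆ (s : Set X) ×ˢ s := fun z hz =>
    (hs (a := z.swap) hz).symm
  rw [transportCost_eq_sum hs, transportCost_eq_sum hs', sum_comm]
  simp_rw [dist_comm]
  rfl

lemma transportCost_composeAlong_rpow_le (hp : 1 ≤ p) (hP : IsCoupling α β P)
    (hQ : IsCoupling β γ Q) :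
    transportCost p (composeAlong β P Q) ^ (1 / p) ≤
      transportCost p P ^ (1 / p) + transportCost p Q ^ (1 / p) := by
  obtain ⟨s, hs⟩ := (hP.2.1.union hQ.2.1).exists_subset_finset_prod
  obtain ⟨hsP, hsQ⟩ := Set.union_subset_iff.1 hs
  set T := gluing β P Q
  have hT := gluing_nonneg (β := β) hP.1 hQ.1
  have hMink := weighted_Lp_add_le (s ×ˢ s ×ˢ s) hp (a := fun i => dist i.2.1 i.1)
    (b := fun i => dist i.1 i.2.2) (w := fun i => T i.2.1 i.1 i.2.2)
    (fun _ _ => dist_nonneg) (fun _ _ => dist_nonneg) (fun _ _ => hT _ _ _)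
  simp only [sum_product] at hMink
  have hcostP :
      ∑ y ∈ s, ∑ x ∈ s, ∑ z ∈ s, dist x y ^ p * T x y z = transportCost p P := by
    rw [transportCost_eq_sum hsP, sum_comm]
    refine sum_congr rfl fun x _ => sum_congr rfl fun y _ => ?_
    rw [← mul_sum, sum_gluing_right hP hQ hsQ]
  have hcostQ :
      ∑ y ∈ s, ∑ x ∈ s, ∑ z ∈ s, dist y z ^ p * T x y z = transportCost p Q := by
    rw [transportCost_eq_sum hsQ]
    refine sum_congr rfl fun y _ => ?_
    rw [sum_comm]
    refine sum_congr rfl fun z _ => ?_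
    rw [← mul_sum, sum_gluing_left hP hQ hsP]
  have hcostR : transportCost p (composeAlong β P Q) ≤
      ∑ y ∈ s, ∑ x ∈ s, ∑ z ∈ s, (dist x y + dist y z) ^ p * T x y z :=
    calc transportCost p (composeAlong β P Q)
        = ∑ x ∈ s, ∑ z ∈ s, ∑ y ∈ s, dist x z ^ p * T x y z := by
          rw [transportCost_eq_sum (support_composeAlong_subset hsP hsQ)]
          simp_rw [composeAlong_eq_sum hsP, mul_sum]
          rfl
      _ ≤ ∑ x ∈ s, ∑ z ∈ s, ∑ y ∈ s, (dist x y + dist y z) ^ p * T x y z := by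
          gcongr with x _ z _ y _
          · exact hT x y z
          · exact dist_triangle x y z
      _ = ∑ x ∈ s, ∑ y ∈ s, ∑ z ∈ s, (dist x y + dist y z) ^ p * T x y z :=
          sum_congr rfl fun x _ => sum_comm
      _ = _ := sum_comm
  calc transportCost p (composeAlong β P Q) ^ (1 / p)
      ≤ (∑ y ∈ s, ∑ x ∈ s, ∑ z ∈ s, (dist x y + dist y z) ^ p * T x y z) ^ (1 / p) := by
        gcongr
        exact transportCost_nonneg (hP.composeAlong hQ).1
    _ ≤ _ := hMink
    _ = _ := by rw [hcostP, hcostQ]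

end Transport

section Wasserstein

variable {p : ℝ} {α β : FinProb X} {P : X → X → ℝ}

def couplingCosts (p : ℝ) (α β : FinProb X) : Set ℝ :=
  {c : ℝ | ∃ P : X → X → ℝ, IsCoupling α β P ∧ c = transportCost p P}

lemma couplingCosts_nonempty (p : ℝ) (α β : FinProb X) : (couplingCosts p α β).Nonempty :=
  ⟨_, _, isCoupling_mul α β, rfl⟩

lemma bddBelow_couplingCosts : BddBelow (couplingCosts p α β) :=
  ⟨0, by rintro _ ⟨P, hP, rfl⟩; exact transportCost_nonneg hP.1⟩

lemma Wpp_nonneg : 0 ≤ Wpp p α β :=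
  Real.sInf_nonneg fun _ ⟨_, hP, hc⟩ => hc ▸ transportCost_nonneg hP.1

lemma Wpp_le_transportCost (hP : IsCoupling α β P) : Wpp p α β ≤ transportCost p P :=
  csInf_le bddBelow_couplingCosts ⟨P, hP, rfl⟩

lemma Wpp_comm (p : ℝ) (α β : FinProb X) : Wpp p α β = Wpp p β α := by
  have h : ∀ α β : FinProb X, couplingCosts p α β ⊆ couplingCosts p β α := by
    rintro α β _ ⟨P, hP, rfl⟩
    exact ⟨flip P, hP.flip, (transportCost_flip hP.2.1).symm⟩
  exact congrArg sInf ((h α β).antisymm (h β α))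

lemma Wpp_self (hp : p ≠ 0) (α : FinProb X) : Wpp p α α = 0 := by
  classical
  refine le_antisymm ((Wpp_le_transportCost (isCoupling_diag α)).trans_eq ?_) Wpp_nonneg
  refine finsum_eq_zero_of_forall_eq_zero fun x => finsum_eq_zero_of_forall_eq_zero fun y => ?_
  by_cases h : x = y
  · simp [h, Real.zero_rpow hp]
  · simp [Pi.single_eq_of_ne' h]

noncomputable def Wp (p : ℝ) (α β : FinProb X) : ℝ :=
  Wpp p α β ^ (1 / p)

lemma Wp_nonneg : 0 ≤ Wp p α β :=
  Real.rpow_nonneg Wpp_nonneg _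

lemma Wp_rpow (hp : p ≠ 0) : Wp p α β ^ p = Wpp p α β := by
  rw [Wp, one_div, Real.rpow_inv_rpow Wpp_nonneg hp]

lemma exists_isCoupling_transportCost_rpow_le (hp : 1 ≤ p) (α β : FinProb X) {ε : ℝ}
    (hε : 0 < ε) :
    ∃ P, IsCoupling α β P ∧ transportCost p P ^ (1 / p) ≤ Wp p α β + ε := by
  have hp0 : 0 < p := zero_lt_one.trans_le hp
  obtain ⟨_, ⟨P, hP, rfl⟩, hlt⟩ :=
    Real.lt_sInf_add_pos (couplingCosts_nonempty p α β) (Real.rpow_pos_of_pos hε p)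
  refine ⟨P, hP, ?_⟩
  calc transportCost p P ^ (1 / p) ≤ (Wpp p α β + ε ^ p) ^ (1 / p) := by
        gcongr
        · exact transportCost_nonneg hP.1
        · exact hlt.le
    _ ≤ Wpp p α β ^ (1 / p) + (ε ^ p) ^ (1 / p) :=
        Real.rpow_add_le_add_rpow Wpp_nonneg (by positivity) (by positivity)
          ((div_le_one hp0).2 hp)
    _ = Wp p α β + ε := by rw [Wp, one_div, Real.rpow_rpow_inv hε.le hp0.ne']

theorem Wp_triangle (hp : 1 ≤ p) (α β γ : FinProb X) :
    Wp p α γ ≤ Wp p α β + Wp p β γ := by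
  refine le_of_forall_pos_le_add fun ε hε => ?_
  obtain ⟨P, hP, hPε⟩ := exists_isCoupling_transportCost_rpow_le hp α β (half_pos hε)
  obtain ⟨Q, hQ, hQε⟩ := exists_isCoupling_transportCost_rpow_le hp β γ (half_pos hε)
  calc Wp p α γ ≤ transportCost p (composeAlong β P Q) ^ (1 / p) := by
        unfold Wp
        gcongr
        · exact Wpp_nonneg
        · exact Wpp_le_transportCost (hP.composeAlong hQ)
    _ ≤ transportCost p P ^ (1 / p) + transportCost p Q ^ (1 / p) :=
        transportCost_composeAlong_rpow_le hp hP hQ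
    _ ≤ Wp p α β + Wp p β γ + ε := by linarith

theorem Wp_le_sum_chain (hp : 1 ≤ p) {n : ℕ} (γ : Fin (n + 1) → FinProb X) :
    Wp p (γ 0) (γ (Fin.last n)) ≤ ∑ i : Fin n, Wp p (γ i.castSucc) (γ i.succ) := by
  induction n with
  | zero => simp [Wp, Wpp_self (zero_lt_one.trans_le hp).ne', (zero_lt_one.trans_le hp).ne']
  | succ n ih =>
    rw [Fin.sum_univ_castSucc, ← Fin.succ_last]
    calc Wp p (γ 0) (γ (Fin.last n).succ)
        ≤ Wp p (γ 0) (γ (Fin.last n).castSucc) +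
            Wp p (γ (Fin.last n).castSucc) (γ (Fin.last n).succ) :=
          Wp_triangle hp _ _ _
      _ ≤ _ := by
        gcongr
        exact ih (γ ∘ Fin.castSucc)

theorem Wpp_le_mul_sum_chain (hp : 1 ≤ p) {n : ℕ} (γ : Fin (n + 1) → FinProb X) :
    Wpp p (γ 0) (γ (Fin.last n)) ≤
      n ^ (p - 1) * ∑ i : Fin n, Wpp p (γ i.castSucc) (γ i.succ) := by
  have hp0 : p ≠ 0 := (zero_lt_one.trans_le hp).ne'
  calc Wpp p (γ 0) (γ (Fin.last n)) = Wp p (γ 0) (γ (Fin.last n)) ^ p := (Wp_rpow hp0).symm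
    _ ≤ (∑ i : Fin n, Wp p (γ i.castSucc) (γ i.succ)) ^ p := by
        gcongr
        · exact Wp_nonneg
        · exact Wp_le_sum_chain hp γ
    _ ≤ _ := by
        simpa [Wp_rpow hp0] using Real.rpow_sum_le_const_mul_sum_rpow_of_nonneg univ
          (f := fun i : Fin n => Wp p (γ i.castSucc) (γ i.succ)) hp fun _ _ => Wp_nonneg

end Wasserstein

section Latent

variable {p : ℝ} {k : ℕ} {μ ν ζ : FinProb X}

def anchorCosts (p : ℝ) (k : ℕ) (μ ν : FinProb X) : Set ℝ :=
  {c : ℝ | ∃ μz νz : FinProb X,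
    μz.finite.toFinset.card ≤ k ∧ νz.finite.toFinset.card ≤ k ∧
    c = Wpp p μ μz + Wpp p μz νz + Wpp p νz ν}

lemma OTL_eq_sInf : OTL p k μ ν = sInf (anchorCosts p k μ ν) := rfl

lemma anchorCosts_nonempty (hk : 1 ≤ k) (p : ℝ) (μ ν : FinProb X) :
    (anchorCosts p k μ ν).Nonempty := by
  classical
  obtain ⟨x⟩ := μ.nonempty
  have hx : (FinProb.dirac x).finite.toFinset.card ≤ k :=
    (FinProb.card_support_dirac x).trans_le hk
  exact ⟨_, _, _, hx, hx, rfl⟩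

lemma nonneg_of_mem_anchorCosts {c : ℝ} (hc : c ∈ anchorCosts p k μ ν) : 0 ≤ c := by
  obtain ⟨μz, νz, -, -, rfl⟩ := hc
  exact add_nonneg (add_nonneg Wpp_nonneg Wpp_nonneg) Wpp_nonneg

lemma bddBelow_anchorCosts : BddBelow (anchorCosts p k μ ν) :=
  ⟨0, fun _ => nonneg_of_mem_anchorCosts⟩

lemma OTL_nonneg : 0 ≤ OTL p k μ ν :=
  Real.sInf_nonneg fun _ => nonneg_of_mem_anchorCosts

lemma OTL_comm (p : ℝ) (k : ℕ) (μ ν : FinProb X) : OTL p k μ ν = OTL p k ν μ := by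
  have h : ∀ μ ν : FinProb X, anchorCosts p k μ ν ⊆ anchorCosts p k ν μ := by
    rintro μ ν _ ⟨μz, νz, hμz, hνz, rfl⟩
    refine ⟨νz, μz, hνz, hμz, ?_⟩
    rw [Wpp_comm p ν νz, Wpp_comm p νz μz, Wpp_comm p μz μ]
    ring
  exact congrArg sInf ((h μ ν).antisymm (h ν μ))

theorem OTL_le_mul_add (hp : 1 ≤ p) (hk : 1 ≤ k) (μ ν ζ : FinProb X) :
    OTL p k μ ν ≤ 4 ^ (p - 1) * (OTL p k μ ζ + OTL p k ζ ν) := by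
  have hC : (1 : ℝ) ≤ 4 ^ (p - 1) := Real.one_le_rpow (by norm_num) (by linarith)
  simp only [OTL_eq_sInf]
  rw [← div_le_iff₀' (zero_lt_one.trans_le hC), ← csInf_add (anchorCosts_nonempty hk p μ ζ)
    bddBelow_anchorCosts (anchorCosts_nonempty hk p ζ ν) bddBelow_anchorCosts]
  refine le_csInf ((anchorCosts_nonempty hk p μ ζ).add (anchorCosts_nonempty hk p ζ ν)) ?_
  rintro _ ⟨_, ⟨μz, ζ₁, hμz, -, rfl⟩, _, ⟨ζ₂, νz, -, hνz, rfl⟩, rfl⟩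
  rw [div_le_iff₀' (zero_lt_one.trans_le hC)]
  have hmid : Wpp p μz νz ≤
      4 ^ (p - 1) * (Wpp p μz ζ₁ + Wpp p ζ₁ ζ + Wpp p ζ ζ₂ + Wpp p ζ₂ νz) := by
    simpa [Fin.sum_univ_four] using Wpp_le_mul_sum_chain hp ![μz, ζ₁, ζ, ζ₂, νz]
  calc sInf (anchorCosts p k μ ν) ≤ Wpp p μ μz + Wpp p μz νz + Wpp p νz ν :=
        csInf_le bddBelow_anchorCosts ⟨μz, νz, hμz, hνz, rfl⟩
    _ ≤ _ := by
        have := le_mul_of_one_le_left (Wpp_nonneg (p := p) (α := μ) (β := μz)) hC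
        have := le_mul_of_one_le_left (Wpp_nonneg (p := p) (α := νz) (β := ν)) hC
        dsimp only
        linarith

theorem OTL_le_mul_max (hp : 1 ≤ p) (hk : 1 ≤ k) (μ ν ζ : FinProb X) :
    OTL p k μ ν ≤ 2 * 4 ^ (p - 1) * max (OTL p k μ ζ) (OTL p k ζ ν) :=
  calc OTL p k μ ν ≤ 4 ^ (p - 1) * (OTL p k μ ζ + OTL p k ζ ν) := OTL_le_mul_add hp hk μ ν ζ
    _ ≤ 4 ^ (p - 1) * (2 * max (OTL p k μ ζ) (OTL p k ζ ν)) := by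
        gcongr
        linarith [le_max_left (OTL p k μ ζ) (OTL p k ζ ν),
          le_max_right (OTL p k μ ζ) (OTL p k ζ ν)]
    _ = _ := by ring

end Latent

/-- The latent Wasserstein discrepancy is (i) nonnegative, (ii) symmetric, and
(iii) satisfies a quasi-triangle inequality: there is `κ > 0` (one may take
`κ = 2·4^(1−1/p)`) with `W_p^L(μ,ν) ≤ κ·max(W_p^L(μ,ζ), W_p^L(ζ,ν))`. -/
theorem latent_wasserstein_quasimetric (p : ℝ) (hp : 1 ≤ p) (k : ℕ) (hk : 1 ≤ k) :
    (∀ μ ν : FinProb X, 0 ≤ WpL p k μ ν) ∧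
    (∀ μ ν : FinProb X, WpL p k μ ν = WpL p k ν μ) ∧
    (∃ κ : ℝ, 0 < κ ∧ ∀ μ ν ζ : FinProb X,
      WpL p k μ ν ≤ κ * max (WpL p k μ ζ) (WpL p k ζ ν)) := by
  have hp0 : 0 < p := zero_lt_one.trans_le hp
  refine ⟨fun μ ν => Real.rpow_nonneg OTL_nonneg _, fun μ ν => by rw [WpL, WpL, OTL_comm],
    (2 * 4 ^ (p - 1)) ^ (1 / p), by positivity, fun μ ν ζ => ?_⟩
  calc WpL p k μ ν
      ≤ (2 * 4 ^ (p - 1) * max (OTL p k μ ζ) (OTL p k ζ ν)) ^ (1 / p) :=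
        Real.rpow_le_rpow OTL_nonneg (OTL_le_mul_max hp hk μ ν ζ) (by positivity)
    _ = (2 * 4 ^ (p - 1)) ^ (1 / p) * max (WpL p k μ ζ) (WpL p k ζ ν) := by
        rw [Real.mul_rpow (by positivity) (le_max_of_le_left OTL_nonneg),
          Real.rpow_max OTL_nonneg OTL_nonneg (by positivity), WpL, WpL]
end

section
/- Let n, m ≥ 1 be integers, let P ∈ ℝ^{n×m} be an entrywise-positive matrix, and let μ ∈ ℝⁿ be an entrywise-positive vector. Define γ* := diag(μ ⊘ (P𝟙))·P, i.e., γ*_{ij} = μ_i·P_{ij}/(Σ_{k=1}^m P_{ik}). Then γ* is entrywise nonnegative, has row sums equal to μ, and for every entrywise-nonnegative matrix γ ∈ ℝ^{n×m} with row sums equal to μ one has KL(γ*‖P) ≤ KL(γ‖P); moreover γ* is the unique such minimizer. That is, γ* is the Bregman (KL) projection of P onto the affine set {γ ≥ 0 : γ𝟙 = μ}. -/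
open Matrix

/-- Kullback–Leibler divergence between matrices:
`KL(γ‖P) = Σ_{ij} γ ij · log (γ ij / P ij)` (with `0 · log 0 = 0`, automatic since
`Real.log 0 = 0` in Lean). -/
noncomputable def matKL {m n : Type*} [Fintype m] [Fintype n]
    (γ P : Matrix m n ℝ) : ℝ :=
  ∑ i, ∑ j, γ i j * Real.log (γ i j / P i j)

lemma klaux (a b : ℝ) (ha : 0 ≤ a) (hb : 0 < b) : a - b ≤ a * Real.log (a / b) := by
  rcases eq_or_lt_of_le ha with h | h
  · simp [← h]; linarith
  · have h1 : Real.log (b / a) ≤ b / a - 1 := Real.log_le_sub_one_of_pos (div_pos hb h)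
    have h2 : Real.log (a / b) = - Real.log (b / a) := by
      rw [← Real.log_inv, inv_div]
    have h3 : a * (b / a) = b := mul_div_cancel₀ b h.ne'
    nlinarith [mul_le_mul_of_nonneg_left h1 ha]

lemma klaux' (a b : ℝ) (ha : 0 ≤ a) (hb : 0 < b) (hne : a ≠ b) :
    a - b < a * Real.log (a / b) := by
  rcases eq_or_lt_of_le ha with h | h
  · simp [← h]; linarith
  · have h1 : Real.log (b / a) < b / a - 1 := by
      apply Real.log_lt_sub_one_of_pos (div_pos hb h)
      intro hcon
      exact hne (by field_simp at hcon; linarith)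
    have h2 : Real.log (a / b) = - Real.log (b / a) := by
      rw [← Real.log_inv, inv_div]
    have h3 : a * (b / a) = b := mul_div_cancel₀ b h.ne'
    nlinarith [mul_lt_mul_of_pos_left h1 h]

/-- The matrix `γ* = diag(μ ⊘ P𝟙) P`, i.e. `γ*_{ij} = μ i · P i j / Σ_k P i k`,
is the unique Bregman (KL) projection of the entrywise-positive matrix `P` onto
the affine set of entrywise-nonnegative matrices with row sums `μ`. -/
theorem kl_projection_row_constraint (n m : ℕ) (hn : 1 ≤ n) (hm : 1 ≤ m)
    (P : Matrix (Fin n) (Fin m) ℝ) (hP : ∀ i j, 0 < P i j)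
    (μ : Fin n → ℝ) (hμ : ∀ i, 0 < μ i) :
    (∀ i j, 0 ≤ (Matrix.of fun i j => μ i * P i j / ∑ k, P i k) i j) ∧
    (∀ i, ∑ j, (Matrix.of fun i j => μ i * P i j / ∑ k, P i k) i j = μ i) ∧
    (∀ γ : Matrix (Fin n) (Fin m) ℝ, (∀ i j, 0 ≤ γ i j) → (∀ i, ∑ j, γ i j = μ i) →
      matKL (Matrix.of fun i j => μ i * P i j / ∑ k, P i k) P ≤ matKL γ P) ∧
    (∀ γ : Matrix (Fin n) (Fin m) ℝ, (∀ i j, 0 ≤ γ i j) → (∀ i, ∑ j, γ i j = μ i) →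
      matKL γ P = matKL (Matrix.of fun i j => μ i * P i j / ∑ k, P i k) P →
      γ = Matrix.of fun i j => μ i * P i j / ∑ k, P i k) := by
  have : NeZero m := ⟨by omega⟩
  set s : Fin n → ℝ := fun i => ∑ k, P i k with hs_def
  have hs : ∀ i, 0 < s i := fun i =>
    Finset.sum_pos (fun k _ => hP i k) Finset.univ_nonempty
  set g : Matrix (Fin n) (Fin m) ℝ :=
    Matrix.of fun i j => μ i * P i j / ∑ k, P i k with hg_def
  have hgval : ∀ i j, g i j = μ i * P i j / s i := fun i j => rfl
  have hg : ∀ i j, 0 < g i j := fun i j => by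
    rw [hgval]; exact div_pos (mul_pos (hμ i) (hP i j)) (hs i)
  have hgrow : ∀ i, ∑ j, g i j = μ i := by
    intro i
    simp only [hgval]
    rw [← Finset.sum_div, ← Finset.mul_sum,
      show (∑ k, P i k) = s i from rfl, mul_div_assoc, div_self (hs i).ne', mul_one]
  -- g i j / P i j = μ i / s i
  have hgP : ∀ i j, g i j / P i j = μ i / s i := by
    intro i j
    rw [hgval, div_div, mul_comm (s i) (P i j), ← div_div, mul_div_assoc,
      div_self (hP i j).ne', mul_one]
  have hlog : ∀ i j, Real.log (μ i / s i) = Real.log (g i j) - Real.log (P i j) := by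
    intro i j
    rw [← hgP i j, Real.log_div (hg i j).ne' (hP i j).ne']
  -- value of KL(g‖P)
  have hKLg : matKL g P = ∑ i, μ i * Real.log (μ i / s i) := by
    unfold matKL
    refine Finset.sum_congr rfl fun i _ => ?_
    rw [show (∑ j, g i j * Real.log (g i j / P i j)) =
        ∑ j, g i j * Real.log (μ i / s i) from
      Finset.sum_congr rfl fun j _ => by rw [hgP i j], ← Finset.sum_mul, hgrow i]
  -- decomposition
  have hdecomp : ∀ γ : Matrix (Fin n) (Fin m) ℝ, (∀ i j, 0 ≤ γ i j) →
      (∀ i, ∑ j, γ i j = μ i) →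
      matKL γ P = (∑ i, ∑ j, γ i j * Real.log (γ i j / g i j)) + matKL g P := by
    intro γ hγ0 hγrow
    rw [hKLg]
    unfold matKL
    rw [← Finset.sum_add_distrib]
    refine Finset.sum_congr rfl fun i _ => ?_
    have : μ i * Real.log (μ i / s i) = ∑ j, γ i j * Real.log (μ i / s i) := by
      rw [← Finset.sum_mul, hγrow i]
    rw [this, ← Finset.sum_add_distrib]
    refine Finset.sum_congr rfl fun j _ => ?_
    rcases eq_or_lt_of_le (hγ0 i j) with h | h
    · simp [← h]
    · rw [Real.log_div h.ne' (hP i j).ne', Real.log_div h.ne' (hg i j).ne', hlog i j]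
      ring
  -- the relative entropy term is nonnegative, entrywise bounded below
  have hterm : ∀ (γ : Matrix (Fin n) (Fin m) ℝ), (∀ i j, 0 ≤ γ i j) →
      ∀ i j, γ i j - g i j ≤ γ i j * Real.log (γ i j / g i j) :=
    fun γ hγ0 i j => klaux _ _ (hγ0 i j) (hg i j)
  have hsumzero : ∀ (γ : Matrix (Fin n) (Fin m) ℝ), (∀ i, ∑ j, γ i j = μ i) →
      (∑ i, ∑ j, (γ i j - g i j)) = 0 := by
    intro γ hγrow
    refine Finset.sum_eq_zero fun i _ => ?_
    rw [Finset.sum_sub_distrib, hγrow i, hgrow i, sub_self]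
  refine ⟨fun i j => (hg i j).le, hgrow, ?_, ?_⟩
  · intro γ hγ0 hγrow
    rw [hdecomp γ hγ0 hγrow]
    have h1 : (0:ℝ) ≤ ∑ i, ∑ j, γ i j * Real.log (γ i j / g i j) := by
      calc (0:ℝ) = ∑ i, ∑ j, (γ i j - g i j) := (hsumzero γ hγrow).symm
        _ ≤ _ := Finset.sum_le_sum fun i _ =>
            Finset.sum_le_sum fun j _ => hterm γ hγ0 i j
    linarith
  · intro γ hγ0 hγrow heq
    rw [hdecomp γ hγ0 hγrow] at heq
    have h0 : ∑ i, ∑ j, γ i j * Real.log (γ i j / g i j) = 0 := by linarith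
    have h1 : ∑ p : Fin n × Fin m,
        (γ p.1 p.2 * Real.log (γ p.1 p.2 / g p.1 p.2) - (γ p.1 p.2 - g p.1 p.2)) = 0 := by
      rw [Fintype.sum_prod_type]
      have hz := hsumzero γ hγrow
      simp only [Finset.sum_sub_distrib] at hz ⊢
      linarith
    have h2 : ∀ p ∈ (Finset.univ : Finset (Fin n × Fin m)),
        (0:ℝ) ≤ γ p.1 p.2 * Real.log (γ p.1 p.2 / g p.1 p.2) - (γ p.1 p.2 - g p.1 p.2) :=
      fun p _ => sub_nonneg.mpr (hterm γ hγ0 p.1 p.2)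
    have h3 := (Finset.sum_eq_zero_iff_of_nonneg h2).mp h1
    ext i j
    by_contra hne
    have := klaux' (γ i j) (g i j) (hγ0 i j) (hg i j) hne
    have h4 := h3 (i, j) (Finset.mem_univ _)
    simp only at h4
    linarith
end

section
/- Let D, N, M, k₁, k₂ ≥ 1 be integers. Let M_x, M_y, M_z ∈ ℝ^{D×D} be symmetric matrices, X ∈ ℝ^{D×N}, Y ∈ ℝ^{D×M}, P_x ∈ ℝ^{N×k₁}, P_z ∈ ℝ^{k₁×k₂}, P_y ∈ ℝ^{k₂×M}, and u_z ∈ ℝ^{k₁}, v_z ∈ ℝ^{k₂}. Define f : ℝ^{D×k₁} × ℝ^{D×k₂} → ℝ by f(Z_x, Z_y) := tr(Z_xᵀ(M_x+M_z)Z_x·diag(u_z)) + tr(Z_yᵀ(M_y+M_z)Z_y·diag(v_z)) − 2·tr(P_xᵀXᵀM_xZ_x) − 2·tr(P_zᵀZ_xᵀM_zZ_y) − 2·tr(P_yᵀZ_yᵀM_yY). Then f is differentiable everywhere, and its Fréchet derivative at (Z_x, Z_y) vanishes if and only if the pair of linear equations (M_x+M_z)·Z_x·diag(u_z) = M_x·X·P_x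 + M_z·Z_y·P_zᵀ and (M_y+M_z)·Z_y·diag(v_z) = M_y·Y·P_yᵀ + M_z·Z_x·P_z holds. -/
open Matrix

attribute [local instance] Matrix.normedAddCommGroup Matrix.normedSpace

/-!
On the finite-dimensional space of anchor pairs `Z = (Z_x, Z_y)` the objective is `b(Z, Z) + l(Z)`
for a bilinear form `b` and a linear form `l`, so its derivative at `Z` is
`H ↦ b(Z, H) + b(H, Z) + l(H)`. Symmetry of `M_x`, `M_y`, `M_z` and cyclicity of the trace turn
this into `2 (tr(H_xᵀ G_x) + tr(H_yᵀ G_y))`, where `G_x`, `G_y` are the residuals of the two linear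
equations. The Frobenius pairing `tr(Aᵀ B)` is nondegenerate (test against `H = (G_x, 0)` and
`H = (0, G_y)`), so the derivative vanishes exactly when both residuals do.
-/

section Quadratic

variable {𝕜 E F : Type*} [NontriviallyNormedField 𝕜] [CompleteSpace 𝕜]
  [NormedAddCommGroup E] [NormedSpace 𝕜 E] [FiniteDimensional 𝕜 E]
  [NormedAddCommGroup F] [NormedSpace 𝕜 F]

theorem LinearMap.hasFDerivAt_apply_self_add (b : E →ₗ[𝕜] E →ₗ[𝕜] F) (l : E →ₗ[𝕜] F) (z : E) :
    HasFDerivAt (fun w => b w w + l w)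
      (LinearMap.toContinuousLinearMap (b z + b.flip z + l)) z := by
  let B : E →L[𝕜] E →L[𝕜] F :=
    LinearMap.toContinuousLinearMap
      ((LinearMap.toContinuousLinearMap : (E →ₗ[𝕜] F) ≃ₗ[𝕜] (E →L[𝕜] F)).toLinearMap ∘ₗ b)
  have hB : HasFDerivAt (fun w => B w w)
      (B.precompR E z (.id 𝕜 E) + B.precompL E (.id 𝕜 E) z) z :=
    B.hasFDerivAt_of_bilinear (hasFDerivAt_id z) (hasFDerivAt_id z)
  have hl : HasFDerivAt l (LinearMap.toContinuousLinearMap l) z :=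
    (LinearMap.toContinuousLinearMap l).hasFDerivAt
  convert hB.add hl using 1
  · rfl
  · ext v
    simp [B]

end Quadratic

section Trace

variable {m n p : Type*} [Fintype m] [Fintype n] [Fintype p]

theorem Matrix.trace_transpose_mul_self_eq_zero_iff {A : Matrix m n ℝ} :
    (Aᵀ * A).trace = 0 ↔ A = 0 := by
  rw [← conjTranspose_eq_transpose_of_trivial]
  exact trace_conjTranspose_mul_self_eq_zero_iff

variable {S : Matrix m m ℝ}

theorem Matrix.IsSymm.trace_transpose_mul_mul_mul (hS : S.IsSymm)
    (A : Matrix m n ℝ) (B : Matrix m p ℝ) (C : Matrix p n ℝ) :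
    (Aᵀ * (S * (B * C))).trace = (Bᵀ * (S * (A * Cᵀ))).trace := by
  rw [← trace_transpose]
  simp only [transpose_mul, transpose_transpose, hS.eq, Matrix.mul_assoc]
  rw [trace_mul_comm Cᵀ]
  simp only [Matrix.mul_assoc]

theorem Matrix.IsSymm.trace_transpose_mul_transpose_mul_mul (hS : S.IsSymm)
    (A : Matrix m n ℝ) (B : Matrix m p ℝ) (C : Matrix n p ℝ) :
    (Cᵀ * (Aᵀ * (S * B))).trace = (Bᵀ * (S * (A * C))).trace := by
  rw [← trace_transpose]
  simp only [transpose_mul, transpose_transpose, hS.eq, Matrix.mul_assoc]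

end Trace

namespace LatentOT

variable {d n m k l : Type*} [Fintype d] [Fintype n] [Fintype m] [Fintype k] [Fintype l]
  [DecidableEq k] [DecidableEq l]
  (Mx My Mz : Matrix d d ℝ) (X : Matrix d n ℝ) (Y : Matrix d m ℝ)
  (Px : Matrix n k ℝ) (Pz : Matrix k l ℝ) (Py : Matrix l m ℝ) (uz : k → ℝ) (vz : l → ℝ)

def objective (Z : Matrix d k ℝ × Matrix d l ℝ) : ℝ :=
  (Z.1ᵀ * (Mx + Mz) * Z.1 * diagonal uz).trace
    + (Z.2ᵀ * (My + Mz) * Z.2 * diagonal vz).trace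
    - 2 * (Pxᵀ * Xᵀ * Mx * Z.1).trace
    - 2 * (Pzᵀ * Z.1ᵀ * Mz * Z.2).trace
    - 2 * (Pyᵀ * Z.2ᵀ * My * Y).trace

def bilinearPart :
    (Matrix d k ℝ × Matrix d l ℝ) →ₗ[ℝ] (Matrix d k ℝ × Matrix d l ℝ) →ₗ[ℝ] ℝ :=
  LinearMap.mk₂ ℝ
    (fun Z W => (Z.1ᵀ * (Mx + Mz) * W.1 * diagonal uz).trace
      + (Z.2ᵀ * (My + Mz) * W.2 * diagonal vz).trace
      - 2 * (Pzᵀ * Z.1ᵀ * Mz * W.2).trace)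
    (fun Z Z' W => by
      simp only [Prod.fst_add, Prod.snd_add, transpose_add, Matrix.add_mul, Matrix.mul_add,
        trace_add]
      ring)
    (fun c Z W => by
      simp only [Prod.smul_fst, Prod.smul_snd, transpose_smul, Matrix.smul_mul, Matrix.mul_smul,
        trace_smul, smul_eq_mul]
      ring)
    (fun Z W W' => by
      simp only [Prod.fst_add, Prod.snd_add, Matrix.add_mul, Matrix.mul_add, trace_add]
      ring)
    (fun c Z W => by
      simp only [Prod.smul_fst, Prod.smul_snd, Matrix.smul_mul, Matrix.mul_smul, trace_smul,
        smul_eq_mul]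
      ring)

def linearPart : (Matrix d k ℝ × Matrix d l ℝ) →ₗ[ℝ] ℝ where
  toFun Z := -2 * (Pxᵀ * Xᵀ * Mx * Z.1).trace - 2 * (Pyᵀ * Z.2ᵀ * My * Y).trace
  map_add' Z W := by
    simp only [Prod.fst_add, Prod.snd_add, transpose_add, Matrix.add_mul, Matrix.mul_add,
      trace_add]
    ring
  map_smul' c Z := by
    simp only [Prod.smul_fst, Prod.smul_snd, transpose_smul, Matrix.smul_mul, Matrix.mul_smul,
      trace_smul, smul_eq_mul, RingHom.id_apply]
    ring

def derivative (Z : Matrix d k ℝ × Matrix d l ℝ) : (Matrix d k ℝ × Matrix d l ℝ) →ₗ[ℝ] ℝ :=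
  bilinearPart Mx My Mz Pz uz vz Z + (bilinearPart Mx My Mz Pz uz vz).flip Z
    + linearPart Mx My X Y Px Py

def halfGradient (Z : Matrix d k ℝ × Matrix d l ℝ) : Matrix d k ℝ × Matrix d l ℝ :=
  ((Mx + Mz) * Z.1 * diagonal uz - (Mx * X * Px + Mz * Z.2 * Pzᵀ),
    (My + Mz) * Z.2 * diagonal vz - (My * Y * Pyᵀ + Mz * Z.1 * Pz))

theorem objective_eq (Z : Matrix d k ℝ × Matrix d l ℝ) :
    objective Mx My Mz X Y Px Pz Py uz vz Z
      = bilinearPart Mx My Mz Pz uz vz Z Z + linearPart Mx My X Y Px Py Z := by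
  simp only [objective, bilinearPart, linearPart, LinearMap.mk₂_apply, LinearMap.coe_mk,
    AddHom.coe_mk]
  ring

theorem hasFDerivAt_objective (Z : Matrix d k ℝ × Matrix d l ℝ) :
    HasFDerivAt (objective Mx My Mz X Y Px Pz Py uz vz)
      (LinearMap.toContinuousLinearMap (derivative Mx My Mz X Y Px Pz Py uz vz Z)) Z := by
  rw [show objective Mx My Mz X Y Px Pz Py uz vz = fun w => _ from
    funext (objective_eq Mx My Mz X Y Px Pz Py uz vz)]
  exact LinearMap.hasFDerivAt_apply_self_add _ _ Z

variable {Mx My Mz X Y Px Pz Py uz vz}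

theorem derivative_apply (hMx : Mx.IsSymm) (hMy : My.IsSymm) (hMz : Mz.IsSymm)
    (Z H : Matrix d k ℝ × Matrix d l ℝ) :
    derivative Mx My Mz X Y Px Pz Py uz vz Z H
      = 2 * ((H.1ᵀ * (halfGradient Mx My Mz X Y Px Pz Py uz vz Z).1).trace
        + (H.2ᵀ * (halfGradient Mx My Mz X Y Px Pz Py uz vz Z).2).trace) := by
  obtain ⟨Zx, Zy⟩ := Z
  obtain ⟨Hx, Hy⟩ := H
  simp only [derivative, bilinearPart, linearPart, halfGradient, LinearMap.add_apply,
    LinearMap.flip_apply, LinearMap.mk₂_apply, LinearMap.coe_mk, AddHom.coe_mk, Matrix.mul_assoc]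
  rw [(hMx.add hMz).trace_transpose_mul_mul_mul, (hMy.add hMz).trace_transpose_mul_mul_mul,
    hMz.trace_transpose_mul_transpose_mul_mul, hMx.trace_transpose_mul_transpose_mul_mul,
    trace_mul_comm Pzᵀ, trace_mul_comm Pyᵀ]
  simp only [diagonal_transpose, Matrix.mul_add, Matrix.mul_sub, trace_add, trace_sub,
    Matrix.mul_assoc]
  ring

theorem derivative_eq_zero_iff (hMx : Mx.IsSymm) (hMy : My.IsSymm) (hMz : Mz.IsSymm)
    (Z : Matrix d k ℝ × Matrix d l ℝ) :
    derivative Mx My Mz X Y Px Pz Py uz vz Z = 0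
      ↔ halfGradient Mx My Mz X Y Px Pz Py uz vz Z = 0 := by
  refine ⟨fun h => ?_, fun h => LinearMap.ext fun H => by
    simp [derivative_apply hMx hMy hMz, h]⟩
  set G := halfGradient Mx My Mz X Y Px Pz Py uz vz Z
  have hG (H : Matrix d k ℝ × Matrix d l ℝ) : (H.1ᵀ * G.1).trace + (H.2ᵀ * G.2).trace = 0 := by
    simpa [derivative_apply hMx hMy hMz] using LinearMap.congr_fun h H
  ext1
  · simpa [trace_transpose_mul_self_eq_zero_iff] using hG (G.1, 0)
  · simpa [trace_transpose_mul_self_eq_zero_iff] using hG (0, G.2)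

end LatentOT

theorem lot_anchor_first_order_general (D N M k₁ k₂ : ℕ)
    (Mx My Mz : Matrix (Fin D) (Fin D) ℝ)
    (hMx : Mxᵀ = Mx) (hMy : Myᵀ = My) (hMz : Mzᵀ = Mz)
    (X : Matrix (Fin D) (Fin N) ℝ) (Y : Matrix (Fin D) (Fin M) ℝ)
    (Px : Matrix (Fin N) (Fin k₁) ℝ) (Pz : Matrix (Fin k₁) (Fin k₂) ℝ)
    (Py : Matrix (Fin k₂) (Fin M) ℝ)
    (uz : Fin k₁ → ℝ) (vz : Fin k₂ → ℝ) :
    Differentiable ℝ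
      (fun Z : Matrix (Fin D) (Fin k₁) ℝ × Matrix (Fin D) (Fin k₂) ℝ =>
        (Z.1ᵀ * (Mx + Mz) * Z.1 * diagonal uz).trace
          + (Z.2ᵀ * (My + Mz) * Z.2 * diagonal vz).trace
          - 2 * (Pxᵀ * Xᵀ * Mx * Z.1).trace
          - 2 * (Pzᵀ * Z.1ᵀ * Mz * Z.2).trace
          - 2 * (Pyᵀ * Z.2ᵀ * My * Y).trace) ∧
    ∀ (Zx : Matrix (Fin D) (Fin k₁) ℝ) (Zy : Matrix (Fin D) (Fin k₂) ℝ),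
      fderiv ℝ
        (fun Z : Matrix (Fin D) (Fin k₁) ℝ × Matrix (Fin D) (Fin k₂) ℝ =>
          (Z.1ᵀ * (Mx + Mz) * Z.1 * diagonal uz).trace
            + (Z.2ᵀ * (My + Mz) * Z.2 * diagonal vz).trace
            - 2 * (Pxᵀ * Xᵀ * Mx * Z.1).trace
            - 2 * (Pzᵀ * Z.1ᵀ * Mz * Z.2).trace
            - 2 * (Pyᵀ * Z.2ᵀ * My * Y).trace) (Zx, Zy) = 0 ↔
      ((Mx + Mz) * Zx * diagonal uz = Mx * X * Px + Mz * Zy * Pzᵀ ∧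
       (My + Mz) * Zy * diagonal vz = My * Y * Pyᵀ + Mz * Zx * Pz) := by
  have hf := LatentOT.hasFDerivAt_objective Mx My Mz X Y Px Pz Py uz vz
  refine ⟨fun Z => (hf Z).differentiableAt, fun Zx Zy => ?_⟩
  change fderiv ℝ (LatentOT.objective Mx My Mz X Y Px Pz Py uz vz) (Zx, Zy) = 0 ↔ _
  rw [(hf (Zx, Zy)).fderiv, LinearEquiv.map_eq_zero_iff,
    LatentOT.derivative_eq_zero_iff hMx hMy hMz, LatentOT.halfGradient, Prod.ext_iff]
  simp only [Prod.fst_zero, Prod.snd_zero, sub_eq_zero]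

/-- The LOT objective, written as an explicit function of the anchor matrices
`(Z_x, Z_y)` (with plans and marginals held fixed), is everywhere differentiable,
and its Fréchet derivative vanishes at `(Z_x, Z_y)` if and only if
`(M_x+M_z) Z_x diag(u_z) = M_x X P_x + M_z Z_y P_zᵀ` and
`(M_y+M_z) Z_y diag(v_z) = M_y Y P_yᵀ + M_z Z_x P_z`. -/
theorem lot_anchor_first_order (D N M k₁ k₂ : ℕ)
    (hD : 1 ≤ D) (hN : 1 ≤ N) (hM : 1 ≤ M) (hk₁ : 1 ≤ k₁) (hk₂ : 1 ≤ k₂)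
    (Mx My Mz : Matrix (Fin D) (Fin D) ℝ)
    (hMx : Mxᵀ = Mx) (hMy : Myᵀ = My) (hMz : Mzᵀ = Mz)
    (X : Matrix (Fin D) (Fin N) ℝ) (Y : Matrix (Fin D) (Fin M) ℝ)
    (Px : Matrix (Fin N) (Fin k₁) ℝ) (Pz : Matrix (Fin k₁) (Fin k₂) ℝ)
    (Py : Matrix (Fin k₂) (Fin M) ℝ)
    (uz : Fin k₁ → ℝ) (vz : Fin k₂ → ℝ) :
    Differentiable ℝ
      (fun Z : Matrix (Fin D) (Fin k₁) ℝ × Matrix (Fin D) (Fin k₂) ℝ =>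
        (Z.1ᵀ * (Mx + Mz) * Z.1 * diagonal uz).trace
          + (Z.2ᵀ * (My + Mz) * Z.2 * diagonal vz).trace
          - 2 * (Pxᵀ * Xᵀ * Mx * Z.1).trace
          - 2 * (Pzᵀ * Z.1ᵀ * Mz * Z.2).trace
          - 2 * (Pyᵀ * Z.2ᵀ * My * Y).trace) ∧
    ∀ (Zx : Matrix (Fin D) (Fin k₁) ℝ) (Zy : Matrix (Fin D) (Fin k₂) ℝ),
      fderiv ℝ
        (fun Z : Matrix (Fin D) (Fin k₁) ℝ × Matrix (Fin D) (Fin k₂) ℝ =>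
          (Z.1ᵀ * (Mx + Mz) * Z.1 * diagonal uz).trace
            + (Z.2ᵀ * (My + Mz) * Z.2 * diagonal vz).trace
            - 2 * (Pxᵀ * Xᵀ * Mx * Z.1).trace
            - 2 * (Pzᵀ * Z.1ᵀ * Mz * Z.2).trace
            - 2 * (Pyᵀ * Z.2ᵀ * My * Y).trace) (Zx, Zy) = 0 ↔
      ((Mx + Mz) * Zx * diagonal uz = Mx * X * Px + Mz * Zy * Pzᵀ ∧
       (My + Mz) * Zy * diagonal vz = My * Y * Pyᵀ + Mz * Zx * Pz) :=
  lot_anchor_first_order_general D N M k₁ k₂ Mx My Mz hMx hMy hMz X Y Px Pz Py uz vz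
end

section
/- Let N, M, k₁, k₂ ≥ 1 be integers. Let P_x ∈ ℝ^{N×k₁}, P_z ∈ ℝ^{k₁×k₂}, P_y ∈ ℝ^{k₂×M} be entrywise-nonnegative matrices, μ ∈ ℝ^N, ν ∈ ℝ^M nonnegative vectors, and u_z ∈ ℝ^{k₁}, v_z ∈ ℝ^{k₂} entrywise-positive vectors, satisfying P_x𝟙 = μ, P_xᵀ𝟙 = u_z = P_z𝟙, P_zᵀ𝟙 = v_z = P_y𝟙, and P_yᵀ𝟙 = ν. Then the factorized matrix P := P_x·diag(u_z)⁻¹·P_z·diag(v_z)⁻¹·P_y is entrywise nonnegative and satisfies P𝟙 = μ and Pᵀ𝟙 = ν; that is, the latent optimal transport plan is a valid coupling of μ and ν. -/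
open Matrix

/-- If the three factors of the latent transport plan have consistent marginals
(`P_x𝟙 = μ`, `P_xᵀ𝟙 = u_z = P_z𝟙`, `P_zᵀ𝟙 = v_z = P_y𝟙`, `P_yᵀ𝟙 = ν`), then the
factored matrix `P = P_x diag(u_z)⁻¹ P_z diag(v_z)⁻¹ P_y` is an entrywise-nonnegative
coupling of `μ` and `ν`: `P𝟙 = μ` and `Pᵀ𝟙 = ν`. -/
theorem lot_plan_is_coupling (N M k₁ k₂ : ℕ)
    (hN : 1 ≤ N) (hM : 1 ≤ M) (hk₁ : 1 ≤ k₁) (hk₂ : 1 ≤ k₂)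
    (Px : Matrix (Fin N) (Fin k₁) ℝ) (Pz : Matrix (Fin k₁) (Fin k₂) ℝ)
    (Py : Matrix (Fin k₂) (Fin M) ℝ)
    (hPx : ∀ i l, 0 ≤ Px i l) (hPz : ∀ l m, 0 ≤ Pz l m) (hPy : ∀ m j, 0 ≤ Py m j)
    (μ : Fin N → ℝ) (ν : Fin M → ℝ) (hμ : ∀ i, 0 ≤ μ i) (hν : ∀ j, 0 ≤ ν j)
    (uz : Fin k₁ → ℝ) (vz : Fin k₂ → ℝ)
    (huz : ∀ l, 0 < uz l) (hvz : ∀ m, 0 < vz m)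
    (hrowx : Px *ᵥ (fun _ => 1) = μ)
    (hmargx : Pxᵀ *ᵥ (fun _ => 1) = uz)
    (hmargz1 : Pz *ᵥ (fun _ => 1) = uz)
    (hmargz2 : Pzᵀ *ᵥ (fun _ => 1) = vz)
    (hmargy : Py *ᵥ (fun _ => 1) = vz)
    (hcoly : Pyᵀ *ᵥ (fun _ => 1) = ν) :
    (∀ i j, 0 ≤ (Px * diagonal (fun l => (uz l)⁻¹) * Pz *
        diagonal (fun m => (vz m)⁻¹) * Py) i j) ∧
    (Px * diagonal (fun l => (uz l)⁻¹) * Pz *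
        diagonal (fun m => (vz m)⁻¹) * Py) *ᵥ (fun _ => 1) = μ ∧
    (Px * diagonal (fun l => (uz l)⁻¹) * Pz *
        diagonal (fun m => (vz m)⁻¹) * Py)ᵀ *ᵥ (fun _ => 1) = ν := by
  have hDu : ∀ l, 0 ≤ (uz l)⁻¹ := fun l => (inv_nonneg).2 (huz l).le
  have hDv : ∀ m, 0 ≤ (vz m)⁻¹ := fun m => (inv_nonneg).2 (hvz m).le
  refine ⟨?_, ?_, ?_⟩
  · have key : ∀ {a b c : Type} [inst : Fintype b] (A : Matrix a b ℝ) (B : Matrix b c ℝ),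
        (∀ i j, 0 ≤ A i j) → (∀ i j, 0 ≤ B i j) → ∀ i j, 0 ≤ (A * B) i j := by
      intro a b c inst A B hA hB i j
      rw [Matrix.mul_apply]
      exact Finset.sum_nonneg fun l _ => mul_nonneg (hA i l) (hB l j)
    have hdu : ∀ (i j : Fin k₁), 0 ≤ diagonal (fun l => (uz l)⁻¹) i j := by
      intro i j; rw [Matrix.diagonal_apply]; split <;> simp [hDu]
    have hdv : ∀ (i j : Fin k₂), 0 ≤ diagonal (fun m => (vz m)⁻¹) i j := by
      intro i j; rw [Matrix.diagonal_apply]; split <;> simp [hDv]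
    exact key _ _ (key _ _ (key _ _ (key _ _ hPx hdu) hPz) hdv) hPy
  · rw [← Matrix.mulVec_mulVec, ← Matrix.mulVec_mulVec, ← Matrix.mulVec_mulVec,
      ← Matrix.mulVec_mulVec, hmargy]
    have h1 : diagonal (fun m => (vz m)⁻¹) *ᵥ vz = fun _ => 1 := by
      funext m; simp [mulVec_diagonal, inv_mul_cancel₀ (hvz m).ne']
    rw [h1, hmargz1]
    have h2 : diagonal (fun l => (uz l)⁻¹) *ᵥ uz = fun _ => 1 := by
      funext l; simp [mulVec_diagonal, inv_mul_cancel₀ (huz l).ne']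
    rw [h2, hrowx]
  · simp only [Matrix.transpose_mul, Matrix.diagonal_transpose]
    rw [← Matrix.mulVec_mulVec, ← Matrix.mulVec_mulVec, ← Matrix.mulVec_mulVec,
      ← Matrix.mulVec_mulVec, hmargx]
    have h2 : diagonal (fun l => (uz l)⁻¹) *ᵥ uz = fun _ => 1 := by
      funext l; simp [mulVec_diagonal, inv_mul_cancel₀ (huz l).ne']
    rw [h2, hmargz2]
    have h1 : diagonal (fun m => (vz m)⁻¹) *ᵥ vz = fun _ => 1 := by
      funext m; simp [mulVec_diagonal, inv_mul_cancel₀ (hvz m).ne']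
    rw [h1, hcoly]
end
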